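/- Let F_poor = gammaCDFReal a_p r_p and F_rich = gammaCDFReal a_r r_r be Gamma CDFs (shapes a_p, a_r > 0, rates r_p, r_r > 0). Let n_a^poor, n_a^rich, n_a'^poor, n_a'^rich > 0 be applicant counts, n their sum, and g > 0. Suppose the default threshold q_o satisfies (n_a^poor + n_a'^poor)·F_poor(q_o) + (n_a^rich + n_a'^rich)·F_rich(q_o) = g, and the top-percentage thresholds q_poor, q_rich satisfy F_poor(q_poor) = F_rich(q_rich) = g/n. Then (n_a^poor + n_a'^poor)·[F_poor(q_poor) − F_poor(q_o)] = (n_a^rich + n_a'^rich)·[F_rich(q_o) − F_rich(q_rich)]: the increase in selective-admission counts for the poor region exactly equals the number of spots reallocated out of the rich region, independently of applicants' demographic group. -/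

import Mathlib

open ProbabilityTheory

/-- CDF of the gamma distribution (removed from Mathlib; restored with its old definition). -/
noncomputable
def ProbabilityTheory.gammaCDFReal (a r : ℝ) : StieltjesFunction ℝ :=
  cdf (gammaMeasure a r)

/-- Theorem 3 (first claim): top-percentage plans reallocate spots from the rich region
to the poor region, independently of applicants' demographic group. -/
theorem top_percentage_reallocates_spots
    (a_p r_p a_r r_r : ℝ) (hap : 0 < a_p) (hrp : 0 < r_p) (har : 0 < a_r) (hrr : 0 < r_r)
    (napoor narich nbpoor nbrich g : ℝ)
    (hnapoor : 0 < napoor) (hnarich : 0 < narich)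
    (hnbpoor : 0 < nbpoor) (hnbrich : 0 < nbrich) (hg : 0 < g)
    (n : ℝ) (hn : n = napoor + narich + nbpoor + nbrich)
    (qo qpoor qrich : ℝ)
    (hdefault : (napoor + nbpoor) * gammaCDFReal a_p r_p qo
      + (narich + nbrich) * gammaCDFReal a_r r_r qo = g)
    (hpoor : gammaCDFReal a_p r_p qpoor = g / n)
    (hrich : gammaCDFReal a_r r_r qrich = g / n) :
    (napoor + nbpoor) * (gammaCDFReal a_p r_p qpoor - gammaCDFReal a_p r_p qo)
      = (narich + nbrich) * (gammaCDFReal a_r r_r qo - gammaCDFReal a_r r_r qrich) := by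
  have hn0 : n ≠ 0 := by rw [hn]; positivity
  rw [hpoor, hrich]
  have : (napoor + nbpoor) * (g / n) + (narich + nbrich) * (g / n) = g := by
    field_simp
    rw [hn]; ring
  linarith
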